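/- arXiv:0912.5220 — 2 statements merged into one kernel-verified Lean document; each statement's English description precedes it below -/
import Mathlib

section
/- Suppose p is a-hyperbolic. Then the Gårding cone Γ_a is exactly the connected component of the open set {x ∈ ℝⁿ : p(x) ≠ 0} that contains the point a. -/
open MvPolynomial

/-- `lam : Fin m → ℝ` is a tuple of `a`-eigenvalues of `x` for the polynomial `p`:
`p(t·a + x) = p(a)·∏ₖ (t + lamₖ)` for all real `t`. -/
def IsEigen {n : ℕ} (m : ℕ) (p : MvPolynomial (Fin n) ℝ) (a x : Fin n → ℝ)
    (lam : Fin m → ℝ) : Prop :=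
  ∀ t : ℝ, eval (t • a + x) p = eval a p * ∏ k, (t + lam k)

/-- `p` is `a`-hyperbolic (of degree `m`): `p(a) > 0` and every `x` has `m` real
`a`-eigenvalues. -/
def IsHyperbolic {n : ℕ} (m : ℕ) (p : MvPolynomial (Fin n) ℝ) (a : Fin n → ℝ) : Prop :=
  0 < eval a p ∧ ∀ x : Fin n → ℝ, ∃ lam : Fin m → ℝ, IsEigen m p a x lam

/-- The open Gårding cone: the set of `x` all of whose `a`-eigenvalues are positive. -/
def GardingCone {n : ℕ} (m : ℕ) (p : MvPolynomial (Fin n) ℝ) (a : Fin n → ℝ) :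
    Set (Fin n → ℝ) :=
  {x | ∃ lam : Fin m → ℝ, IsEigen m p a x lam ∧ ∀ k, 0 < lam k}

-- The ordered (non-decreasing) arrangement `λ↑` of the `a`-eigenvalues of `x`
-- (defined via choice; for a hyperbolic `p` the monotone arrangement exists and is unique).
open scoped Classical in
noncomputable def ordEig {n : ℕ} (m : ℕ) (p : MvPolynomial (Fin n) ℝ) (a x : Fin n → ℝ) :
    Fin m → ℝ :=
  if h : ∃ lam : Fin m → ℝ, Monotone lam ∧ IsEigen m p a x lam then h.choose
  else fun _ => 0

/-- The directional derivative `p'_b(a) = (d/ds) p(a + s·b) |_{s=0}`. -/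
noncomputable def dirDeriv {n : ℕ} (p : MvPolynomial (Fin n) ℝ) (a b : Fin n → ℝ) : ℝ :=
  deriv (fun s : ℝ => eval (a + s • b) p) 0

/-!
Since the roots of `t ↦ p(t a + x)` are the negated eigenvalues of `x`, the cone `Γ` consists of
the `x` with `p(t a + x) ≠ 0` for all `t ≥ 0`. By homogeneity this condition passes to the
segment from `a` to `x`, so `Γ` is star-shaped about `a`, hence connected, and lies in `{p ≠ 0}`.
It is open, since homogeneity reduces the condition on the ray `t ≥ 0` to the two compact
segments `t a + x` and `a + t x`, `t ∈ [0, 1]`. It is closed in `{p ≠ 0}`: nonnegative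
eigenvalues of `x` are bounded by `p(a + x) / p(a)`, so along a convergent sequence in `Γ` they
have a convergent subsequence, whose limit consists of eigenvalues of the limit point, and these
are nonzero where `p ≠ 0`. A connected relatively clopen set containing `a` is the component
of `a`.
-/

open Filter Topology Set

theorem MvPolynomial.IsHomogeneous.eval_smul {σ : Type*} [Fintype σ] {R : Type*} [CommSemiring R]
    {p : MvPolynomial σ R} {m : ℕ} (hp : p.IsHomogeneous m) (c : R) (x : σ → R) :
    eval (c • x) p = c ^ m * eval x p := by
  rw [eval_eq', eval_eq', Finset.mul_sum]
  refine Finset.sum_congr rfl fun d hd => ?_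
  have hdeg : ∑ i, d i = m := by
    rw [← hp (mem_support_iff.mp hd), Finsupp.weight_apply, Finsupp.sum_fintype _ _ (by simp)]
    simp
  simp only [Pi.smul_apply, smul_eq_mul, mul_pow, Finset.prod_mul_distrib,
    Finset.prod_pow_eq_pow_sum, hdeg]
  ring

theorem MvPolynomial.IsHomogeneous.eval_smul_add {σ : Type*} [Fintype σ] {K : Type*} [Field K]
    {p : MvPolynomial σ K} {m : ℕ} (hp : p.IsHomogeneous m) {t : K} (ht : t ≠ 0)
    (a x : σ → K) :
    eval (t • a + x) p = t ^ m * eval (a + t⁻¹ • x) p := by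
  rw [← hp.eval_smul, smul_add, smul_smul, mul_inv_cancel₀ ht, one_smul]

theorem IsCompact.isOpen_setOf_forall {X Y : Type*} [TopologicalSpace X] [TopologicalSpace Y]
    {K : Set Y} (hK : IsCompact K) {P : X → Y → Prop} (hP : IsOpen {z : X × Y | P z.1 z.2}) :
    IsOpen {x | ∀ y ∈ K, P x y} :=
  isOpen_iff_mem_nhds.mpr fun _ hx =>
    hK.eventually_forall_of_forall_eventually fun y hy => hP.mem_nhds (hx y hy)

section Garding

variable {n m : ℕ} {p : MvPolynomial (Fin n) ℝ} {a x : Fin n → ℝ} {lam : Fin m → ℝ}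

theorem IsEigen.eval_eq (h : IsEigen m p a x lam) : eval x p = eval a p * ∏ k, lam k := by
  simpa using h 0

theorem isClosed_setOf_isEigen :
    IsClosed {q : (Fin n → ℝ) × (Fin m → ℝ) | IsEigen m p a q.1 q.2} := by
  simp only [IsEigen, ofPred_forall]
  exact isClosed_iInter fun t => isClosed_eq
    ((continuous_eval p).comp (continuous_const.add continuous_fst))
    (continuous_const.mul (continuous_finsetProd _ fun k _ =>
      continuous_const.add ((continuous_apply k).comp continuous_snd)))

theorem IsEigen.le_eval_add_div_of_nonneg (h : IsEigen m p a x lam) (hpa : eval a p ≠ 0)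
    (hlam : ∀ k, 0 ≤ lam k) (k : Fin m) : lam k ≤ eval (a + x) p / eval a p := by
  have hprod : eval (a + x) p / eval a p = ∏ j, (1 + lam j) := by
    rw [← one_smul ℝ a, h 1, one_smul, mul_div_cancel_left₀ _ hpa]
  rw [hprod]
  calc lam k ≤ 1 + lam k := by linarith
    _ ≤ ∏ j, (1 + lam j) :=
      Multiset.mem_le_prod_of_one_le (f := fun j => 1 + lam j) (fun j => by linarith [hlam j])
        (Finset.mem_univ k)

theorem isClosed_setOf_isEigen_nonneg (hpa : eval a p ≠ 0) :
    IsClosed {x | ∃ lam : Fin m → ℝ, IsEigen m p a x lam ∧ ∀ k, 0 ≤ lam k} := by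
  refine IsSeqClosed.isClosed fun u x hu hux => ?_
  choose lam heig hnonneg using hu
  obtain ⟨B, hB⟩ : BddAbove (range fun i => eval (a + u i) p / eval a p) :=
    ((((continuous_eval p).tendsto _).comp (tendsto_const_nhds.add hux)).div_const _).bddAbove_range
  have hbounded : ∀ i, lam i ∈ Icc 0 (fun _ => B) := fun i =>
    ⟨hnonneg i, fun k =>
      (heig i).le_eval_add_div_of_nonneg hpa (hnonneg i) k |>.trans (hB ⟨i, rfl⟩)⟩
  obtain ⟨μ, hμ, φ, hφ, hlim⟩ := tendsto_subseq_of_bounded (Metric.isBounded_Icc _ _) hbounded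
  rw [closure_Icc] at hμ
  have hlimit : Tendsto (fun i => (u (φ i), lam (φ i))) atTop (𝓝 (x, μ)) :=
    (hux.comp hφ.tendsto_atTop).prodMk_nhds hlim
  have heigμ : (x, μ) ∈ {q : (Fin n → ℝ) × (Fin m → ℝ) | IsEigen m p a q.1 q.2} :=
    isClosed_setOf_isEigen.mem_of_tendsto hlimit (.of_forall fun i => heig (φ i))
  exact ⟨μ, heigμ, Pi.le_def.mp hμ.1⟩

theorem mem_gardingCone_of_mem_closure (hpa : eval a p ≠ 0)
    (hx : x ∈ closure (GardingCone m p a)) (hne : eval x p ≠ 0) : x ∈ GardingCone m p a := by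
  have hsub :
      GardingCone m p a ⊆ {x | ∃ lam : Fin m → ℝ, IsEigen m p a x lam ∧ ∀ k, 0 ≤ lam k} :=
    fun _ ⟨lam, h, hpos⟩ => ⟨lam, h, fun k => (hpos k).le⟩
  obtain ⟨lam, h, hnonneg⟩ := closure_minimal hsub (isClosed_setOf_isEigen_nonneg hpa) hx
  refine ⟨lam, h, fun k => (hnonneg k).lt_of_ne fun hk => hne ?_⟩
  rw [h.eval_eq, Finset.prod_eq_zero (Finset.mem_univ k) hk.symm, mul_zero]

theorem mem_gardingCone_iff (hhyp : IsHyperbolic m p a) :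
    x ∈ GardingCone m p a ↔ ∀ t : ℝ, 0 ≤ t → eval (t • a + x) p ≠ 0 := by
  constructor
  · rintro ⟨lam, h, hpos⟩ t ht
    rw [h t]
    exact (mul_pos hhyp.1 (Finset.prod_pos fun k _ => by linarith [hpos k])).ne'
  · intro hx
    obtain ⟨lam, h⟩ := hhyp.2 x
    refine ⟨lam, h, fun k => lt_of_not_ge fun hk => hx (-lam k) (neg_nonneg.mpr hk) ?_⟩
    rw [h, Finset.prod_eq_zero (Finset.mem_univ k) (neg_add_cancel _), mul_zero]

theorem forall_nonneg_eval_smul_add_ne_zero_iff (hp : p.IsHomogeneous m) (hpa : eval a p ≠ 0) :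
    (∀ t : ℝ, 0 ≤ t → eval (t • a + x) p ≠ 0) ↔
      ∀ t ∈ Icc (0 : ℝ) 1, eval (t • a + x) p ≠ 0 ∧ eval (a + t • x) p ≠ 0 := by
  constructor
  · refine fun hx t ht => ⟨hx t ht.1, ?_⟩
    rcases ht.1.eq_or_lt with rfl | htpos
    · simpa using hpa
    · have := hx t⁻¹ (inv_nonneg.mpr ht.1)
      rw [hp.eval_smul_add (inv_ne_zero htpos.ne'), inv_inv] at this
      exact right_ne_zero_of_mul this
  · intro hx t ht
    rcases le_or_gt t 1 with hle | hgt
    · exact (hx t ⟨ht, hle⟩).1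
    · have htpos : 0 < t := one_pos.trans hgt
      rw [hp.eval_smul_add htpos.ne']
      exact mul_ne_zero (pow_ne_zero _ htpos.ne')
        (hx t⁻¹ ⟨inv_nonneg.mpr ht, inv_le_one_of_one_le₀ hgt.le⟩).2

theorem isOpen_gardingCone (hp : p.IsHomogeneous m) (hhyp : IsHyperbolic m p a) :
    IsOpen (GardingCone m p a) := by
  have hcone : GardingCone m p a =
      {x | ∀ t ∈ Icc (0 : ℝ) 1, eval (t • a + x) p ≠ 0 ∧ eval (a + t • x) p ≠ 0} := by
    ext x
    exact (mem_gardingCone_iff hhyp).trans (forall_nonneg_eval_smul_add_ne_zero_iff hp hhyp.1.ne')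
  rw [hcone]
  refine isCompact_Icc.isOpen_setOf_forall (IsOpen.inter ?_ ?_)
  · exact isOpen_ne_fun ((continuous_eval p).comp (by fun_prop)) continuous_const
  · exact isOpen_ne_fun ((continuous_eval p).comp (by fun_prop)) continuous_const

theorem self_mem_gardingCone (hp : p.IsHomogeneous m) : a ∈ GardingCone m p a := by
  refine ⟨fun _ => 1, fun t => ?_, fun _ => one_pos⟩
  rw [show t • a + a = (t + 1) • a by rw [add_smul, one_smul], hp.eval_smul, Finset.prod_const,
    Finset.card_univ, Fintype.card_fin]
  ring

theorem starConvex_gardingCone (hp : p.IsHomogeneous m) (hhyp : IsHyperbolic m p a) :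
    StarConvex ℝ a (GardingCone m p a) := by
  intro y hy s t hs ht hst
  rcases ht.eq_or_lt with rfl | htpos
  · rw [add_zero] at hst
    simpa [hst] using self_mem_gardingCone hp
  rw [mem_gardingCone_iff hhyp] at hy ⊢
  intro τ hτ
  have hpoint : τ • a + (s • a + t • y) = t • (((τ + s) / t) • a + y) := by
    rw [smul_add, smul_smul, mul_div_cancel₀ _ htpos.ne', add_smul, add_assoc]
  rw [hpoint, hp.eval_smul]
  exact mul_ne_zero (pow_ne_zero _ htpos.ne') (hy _ (by positivity))

end Garding

theorem garding_cone_eq_connectedComponentIn_general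
    {n m : ℕ} (p : MvPolynomial (Fin n) ℝ) (hp : p.IsHomogeneous m)
    (a : Fin n → ℝ) (hhyp : IsHyperbolic m p a) :
    GardingCone m p a = connectedComponentIn {x : Fin n → ℝ | eval x p ≠ 0} a := by
  have ha : a ∈ GardingCone m p a := self_mem_gardingCone hp
  have hsub : GardingCone m p a ⊆ {x | eval x p ≠ 0} := fun x hx => by
    simpa using (mem_gardingCone_iff hhyp).mp hx 0 le_rfl
  refine Subset.antisymm ?_ ?_
  · exact ((starConvex_gardingCone hp hhyp).isPathConnected ha).isConnected.isPreconnected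
      |>.subset_connectedComponentIn ha hsub
  · refine isPreconnected_connectedComponentIn.subset_of_closure_inter_subset
      (isOpen_gardingCone hp hhyp) ⟨a, mem_connectedComponentIn (hsub ha), ha⟩ ?_
    rintro x ⟨hx, hxU⟩
    exact mem_gardingCone_of_mem_closure hhyp.1.ne' hx (connectedComponentIn_subset _ _ hxU)

/-- the Gårding cone `Γ_a` is exactly the connected component of
`{x : p(x) ≠ 0}` containing `a`. -/
theorem garding_cone_eq_connectedComponentIn
    {n m : ℕ} (hm : 1 ≤ m) (p : MvPolynomial (Fin n) ℝ) (hp : p.IsHomogeneous m)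
    (a : Fin n → ℝ) (hhyp : IsHyperbolic m p a) :
    GardingCone m p a = connectedComponentIn {x : Fin n → ℝ | eval x p ≠ 0} a :=
  garding_cone_eq_connectedComponentIn_general p hp a hhyp
end

section
/- Suppose (p_j) is a sequence of homogeneous polynomials of degree m on ℝⁿ, each a-hyperbolic, and suppose p is a homogeneous polynomial of degree m such that p_j → p pointwise on ℝⁿ (equivalently, coefficientwise). If p(a) ≠ 0, then p(a) > 0 and p is a-hyperbolic. -/
open MvPolynomial

/-!
Fix `x`. The polynomials `t ↦ P_j(t a + x) = P_j(a) ∏ₖ (t + λₖ(j))` have degree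
at most `m` and converge at the `m + 1` nodes `0, …, m`, so by Lagrange interpolation their
coefficients converge; dividing by `P_j(a) → p(a) ≠ 0`, so do those of the monic real-rooted
factors `∏ₖ (X + λₖ(j))`. Cauchy's root bound then confines the eigenvalue tuples `λ(j)` to a
compact box, and any limit point of them is a tuple of `a`-eigenvalues of `x` for `p`.
-/

open Filter Topology
open scoped Polynomial

namespace Polynomial

theorem exists_tendsto_coeff_of_tendsto_eval {K ι : Type*} [Field K] [CharZero K]
    [TopologicalSpace K] [IsTopologicalRing K] {l : Filter ι} {m : ℕ} {Q : ι → K[X]}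
    (hdeg : ∀ j, (Q j).degree ≤ m) {f : K → K}
    (hf : ∀ t, Tendsto (fun j => (Q j).eval t) l (𝓝 (f t))) (i : ℕ) :
    ∃ L, Tendsto (fun j => (Q j).coeff i) l (𝓝 L) := by
  set s := Finset.range (m + 1)
  have hinj : Set.InjOn (fun k : ℕ => (k : K)) s := fun _ _ _ _ h => Nat.cast_injective h
  have hcoeff : ∀ j, (Q j).coeff i =
      ∑ k ∈ s, (Q j).eval (k : K) * (Lagrange.basis s (fun k : ℕ => (k : K)) k).coeff i := by
    intro j
    have hlt : (Q j).degree < s.card := by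
      rw [Finset.card_range]
      exact (hdeg j).trans_lt (WithBot.coe_lt_coe.mpr m.lt_succ_self)
    conv_lhs => rw [Lagrange.eq_interpolate hinj hlt]
    simp only [Lagrange.interpolate_apply, finsetSum_coeff, coeff_C_mul]
  exact ⟨_, (tendsto_finsetSum s fun k _ => (hf k).mul_const _).congr fun j => (hcoeff j).symm⟩

end Polynomial

noncomputable def eigenPoly {m : ℕ} (lam : Fin m → ℝ) : ℝ[X] :=
  ∏ k, (Polynomial.X + Polynomial.C (lam k))

theorem eigenPoly_monic {m : ℕ} (lam : Fin m → ℝ) : (eigenPoly lam).Monic :=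
  Polynomial.monic_prod_of_monic _ _ fun _ _ => Polynomial.monic_X_add_C _

theorem natDegree_eigenPoly {m : ℕ} (lam : Fin m → ℝ) : (eigenPoly lam).natDegree = m := by
  simp [eigenPoly, Polynomial.natDegree_prod_of_monic _ _ fun _ _ => Polynomial.monic_X_add_C _]

theorem eval_eigenPoly {m : ℕ} (lam : Fin m → ℝ) (t : ℝ) :
    (eigenPoly lam).eval t = ∏ k, (t + lam k) := by
  simp [eigenPoly, Polynomial.eval_prod]

theorem abs_lt_of_abs_coeff_eigenPoly_le {m : ℕ} {lam : Fin m → ℝ} {B : ℝ}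
    (hB : ∀ i < m, |(eigenPoly lam).coeff i| ≤ B) (k : Fin m) : |lam k| < B + 1 := by
  have hroot : (eigenPoly lam).IsRoot (-lam k) := by
    rw [Polynomial.IsRoot, eval_eigenPoly]
    exact Finset.prod_eq_zero (Finset.mem_univ k) (by ring)
  have hsup : (Finset.range m).sup (‖(eigenPoly lam).coeff ·‖₊) ≤ B.toNNReal :=
    Finset.sup_le fun i hi => by
      rw [← NNReal.coe_le_coe, coe_nnnorm, Real.norm_eq_abs]
      exact (hB i (Finset.mem_range.mp hi)).trans (Real.le_coe_toNNReal B)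
  have h := hroot.norm_lt_cauchyBound (eigenPoly_monic lam).ne_zero
  rw [Polynomial.cauchyBound, (eigenPoly_monic lam).leadingCoeff, natDegree_eigenPoly] at h
  simp only [nnnorm_one, div_one, nnnorm_neg] at h
  have hB₀ : 0 ≤ B := (abs_nonneg _).trans (hB 0 k.pos)
  have := NNReal.coe_lt_coe.mpr (h.trans_le (add_le_add_left hsup 1))
  rwa [NNReal.coe_add, coe_nnnorm, Real.coe_toNNReal B hB₀, NNReal.coe_one,
    Real.norm_eq_abs] at this

theorem exists_subseq_tendsto_of_tendsto_coeff_eigenPoly {m : ℕ} {lam : ℕ → Fin m → ℝ}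
    (h : ∀ i, ∃ L, Tendsto (fun j => (eigenPoly (lam j)).coeff i) atTop (𝓝 L)) :
    ∃ μ, ∃ φ : ℕ → ℕ, StrictMono φ ∧ Tendsto (lam ∘ φ) atTop (𝓝 μ) := by
  choose L hL using h
  obtain ⟨B, hB⟩ := (tendsto_finsetSum (Finset.range m) fun i _ => (hL i).abs).bddAbove_range
  have hbound : ∀ j, lam j ∈ Set.Icc (fun _ => -(B + 1)) (fun _ => B + 1) := by
    intro j
    have hlt : ∀ k, |lam j k| < B + 1 := abs_lt_of_abs_coeff_eigenPoly_le fun i hi =>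
      (Finset.single_le_sum (fun i _ => abs_nonneg _) (Finset.mem_range.mpr hi)).trans
        (hB ⟨j, rfl⟩)
    exact ⟨fun k => (abs_lt.mp (hlt k)).1.le, fun k => (abs_lt.mp (hlt k)).2.le⟩
  obtain ⟨μ, -, φ, hφ, hμ⟩ := tendsto_subseq_of_bounded (Metric.isBounded_Icc _ _) hbound
  exact ⟨μ, φ, hφ, hμ⟩

theorem isEigen_of_tendsto {n m : ℕ} {ι : Type*} {l : Filter ι} [l.NeBot]
    {P : ι → MvPolynomial (Fin n) ℝ} {p : MvPolynomial (Fin n) ℝ}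
    (hconv : ∀ y, Tendsto (fun j => eval y (P j)) l (𝓝 (eval y p)))
    {a x : Fin n → ℝ} {lam : ι → Fin m → ℝ} {μ : Fin m → ℝ} (hlam : Tendsto lam l (𝓝 μ))
    (h : ∀ j, IsEigen m (P j) a x (lam j)) : IsEigen m p a x μ := by
  intro t
  have hprod : Tendsto (fun j => ∏ k, (t + lam j k)) l (𝓝 (∏ k, (t + μ k))) :=
    tendsto_finsetProd _ fun k _ =>
      tendsto_const_nhds.add (((continuous_apply k).tendsto μ).comp hlam)
  exact tendsto_nhds_unique (hconv _) (((hconv a).mul hprod).congr fun j => (h j t).symm)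

theorem exists_isEigen_of_tendsto {n m : ℕ} {P : ℕ → MvPolynomial (Fin n) ℝ}
    {p : MvPolynomial (Fin n) ℝ}
    (hconv : ∀ y, Tendsto (fun j => eval y (P j)) atTop (𝓝 (eval y p)))
    {a x : Fin n → ℝ} (ha : eval a p ≠ 0) {lam : ℕ → Fin m → ℝ}
    (h : ∀ j, IsEigen m (P j) a x (lam j)) : ∃ μ, IsEigen m p a x μ := by
  set Q : ℕ → ℝ[X] := fun j => Polynomial.C (eval a (P j)) * eigenPoly (lam j)
  have hQ_eval : ∀ j t, (Q j).eval t = eval (t • a + x) (P j) := fun j t => by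
    simp [Q, eval_eigenPoly, h j t]
  have hQ_deg : ∀ j, (Q j).degree ≤ m := fun j => Polynomial.degree_le_of_natDegree_le <|
    (Polynomial.natDegree_C_mul_le _ _).trans (natDegree_eigenPoly (lam j)).le
  have hQ_coeff := Polynomial.exists_tendsto_coeff_of_tendsto_eval hQ_deg
    (f := fun t => eval (t • a + x) p) fun t => by simpa only [hQ_eval] using hconv (t • a + x)
  have hne : ∀ᶠ j in atTop, eval a (P j) ≠ 0 := (hconv a).eventually_ne ha
  obtain ⟨μ, φ, hφ, hμ⟩ := exists_subseq_tendsto_of_tendsto_coeff_eigenPoly (lam := lam) fun i => by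
    obtain ⟨L, hL⟩ := hQ_coeff i
    refine ⟨L / eval a p, (hL.div (hconv a) ha).congr' ?_⟩
    filter_upwards [hne] with j hj
    simp [Q, Polynomial.coeff_C_mul, hj]
  exact ⟨μ, isEigen_of_tendsto (fun y => (hconv y).comp hφ.tendsto_atTop) hμ fun j => h (φ j)⟩

theorem limit_of_hyperbolic_is_hyperbolic_general
    {n m : ℕ} (P : ℕ → MvPolynomial (Fin n) ℝ)
    (a : Fin n → ℝ) (hPa : ∀ j, IsHyperbolic m (P j) a)
    (p : MvPolynomial (Fin n) ℝ)
    (hconv : ∀ x : Fin n → ℝ,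
      Filter.Tendsto (fun j => eval x (P j)) Filter.atTop (nhds (eval x p)))
    (ha : eval a p ≠ 0) :
    0 < eval a p ∧ IsHyperbolic m p a := by
  have hpos : 0 < eval a p :=
    (ge_of_tendsto' (hconv a) fun j => (hPa j).1.le).lt_of_ne' ha
  refine ⟨hpos, hpos, fun x => ?_⟩
  choose lam hlam using fun j => (hPa j).2 x
  exact exists_isEigen_of_tendsto hconv ha hlam

/-- a pointwise limit of `a`-hyperbolic polynomials of degree `m`, which is
homogeneous of degree `m` and does not vanish at `a`, is positive at `a` and `a`-hyperbolic. -/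
theorem limit_of_hyperbolic_is_hyperbolic
    {n m : ℕ} (hm : 1 ≤ m) (P : ℕ → MvPolynomial (Fin n) ℝ)
    (hP : ∀ j, (P j).IsHomogeneous m)
    (a : Fin n → ℝ) (hPa : ∀ j, IsHyperbolic m (P j) a)
    (p : MvPolynomial (Fin n) ℝ) (hp : p.IsHomogeneous m)
    (hconv : ∀ x : Fin n → ℝ,
      Filter.Tendsto (fun j => eval x (P j)) Filter.atTop (nhds (eval x p)))
    (ha : eval a p ≠ 0) :
    0 < eval a p ∧ IsHyperbolic m p a :=
  limit_of_hyperbolic_is_hyperbolic_general P a hPa p hconv ha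
end
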